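/- arXiv:2604.21323 — 4 statements merged into one kernel-verified Lean document; each statement's English description precedes it below -/
import Mathlib

section
/- Let H be a finite-dimensional Hilbert space with D := dim(Herm(H)) = (dim H)², let Φ : Herm(H) → S be a linear map into a real vector space S of dimension m, and suppose Φ is positively homogeneous on the positive cone in the sense that it is linear. Let M = (M₁,...,M_s) be a POVM with s > D + m. Then there exists a POVM N = (N₁,...,N_{s'}) with s' ≤ D + m, each Nₓ a nonnegative scalar multiple of some Mₓ, such that Σₓ Φ(Nₓ) = Σₓ Φ(Mₓ). More precisely: there exists a POVM with at most D + m outcomes, each element of the form cₓMₓ with cₓ ≥ 0, having the same value of Σₓ Φ(Mₓ) and the same sum Σₓ Mₓ = I. -/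
/-!
Conic Carathéodory: a nonnegative combination of finitely many vectors can be rewritten as a
nonnegative combination of a linearly independent subfamily, by repeatedly using a linear
dependency to drive one coefficient to zero while keeping the others nonnegative. Apply this to
the vectors `(re Mₓ + im Mₓ, Φ Mₓ)` in the real space `ℝ^(n × n) × S` of dimension `n² + m`, with
all coefficients `1`. Since `A ↦ re A + im A` is injective on Hermitian matrices, equality of the
first components gives `∑ cₓ Mₓ = 1`, and the second gives equality of the `Φ`-sums.
-/

open Matrix Module Finset
open scoped ComplexOrder

section ConicCaratheodory

variable {𝕜 V ι : Type*} [Field 𝕜] [LinearOrder 𝕜] [IsStrictOrderedRing 𝕜]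
  [AddCommGroup V] [Module 𝕜 V] [Fintype ι]

/-- A dependency `∑ g i • v i = 0` on the support of `b`, with some `g i > 0`, lets us rescale
`b i` by `1 - t * (g i / b i)` where `t = 1 / maxᵢ (g i / b i)`: the coefficients stay
nonnegative and the one where the maximum is attained vanishes. -/
lemma exists_nonneg_sum_smul_eq_of_not_linearIndepOn {v : ι → V} {b : ι → 𝕜} (hb : 0 ≤ b)
    (hdep : ¬LinearIndepOn 𝕜 v ↑(univ.filter (b · ≠ 0))) :
    ∃ b' : ι → 𝕜, 0 ≤ b' ∧ ∑ i, b' i • v i = ∑ i, b i • v i ∧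
      #(univ.filter (b' · ≠ 0)) < #(univ.filter (b · ≠ 0)) := by
  obtain ⟨g, hg, i₀, hi₀, hgi₀⟩ := not_linearIndepOn_finset_iff.mp hdep
  wlog hpos : 0 < g i₀ generalizing g
  · refine this (-g) (by simp [hg]) (neg_ne_zero.mpr hgi₀) ?_
    simpa using lt_of_le_of_ne (not_lt.mp hpos) hgi₀
  have hbi₀ : 0 < b i₀ := (hb i₀).lt_of_ne' (mem_filter.mp hi₀).2
  set α : ι → 𝕜 := fun i => g i / b i
  obtain ⟨j, -, hj⟩ := exists_max_image univ α ⟨i₀, mem_univ _⟩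
  have hαj : 0 < α j := (div_pos hpos hbi₀).trans_le (hj i₀ (mem_univ _))
  set t := (α j)⁻¹
  have hbα : ∑ i, (b i * α i) • v i = 0 := by
    rw [← hg, sum_filter]
    refine sum_congr rfl fun i _ => ?_
    split_ifs with h
    · rw [mul_div_cancel₀ _ h]
    · simp [not_not.mp h]
  refine ⟨fun i => b i * (1 - t * α i), fun i => ?_, ?_, ?_⟩
  · have : t * α i ≤ 1 := by
      rw [← inv_mul_cancel₀ hαj.ne']
      exact mul_le_mul_of_nonneg_left (hj i (mem_univ _)) (inv_nonneg.mpr hαj.le)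
    exact mul_nonneg (hb i) (sub_nonneg.mpr this)
  · have hterm : ∀ i, (b i * (1 - t * α i)) • v i = b i • v i - t • (b i * α i) • v i := by
      intro i
      rw [mul_sub, mul_one, sub_smul, mul_left_comm, mul_smul t]
    simp only [hterm, sum_sub_distrib, ← smul_sum, hbα, smul_zero, sub_zero]
  · refine card_lt_card ((ssubset_iff_of_subset fun i => ?_).mpr ⟨j, ?_, ?_⟩)
    · simp only [mem_filter, mem_univ, true_and]
      exact left_ne_zero_of_mul
    · simp only [mem_filter, mem_univ, true_and]
      intro h
      simp [α, h] at hαj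
    · simp [t, hαj.ne']

theorem exists_nonneg_sum_smul_eq_linearIndepOn (v : ι → V) {a : ι → 𝕜} (ha : 0 ≤ a) :
    ∃ b : ι → 𝕜, 0 ≤ b ∧ ∑ i, b i • v i = ∑ i, a i • v i ∧
      LinearIndepOn 𝕜 v ↑(univ.filter (b · ≠ 0)) := by
  induction hk : #(univ.filter (a · ≠ 0)) using Nat.strong_induction_on generalizing a with
  | _ k ih =>
    by_cases hind : LinearIndepOn 𝕜 v ↑(univ.filter (a · ≠ 0))
    · exact ⟨a, ha, rfl, hind⟩
    obtain ⟨a', ha', hsum, hcard⟩ := exists_nonneg_sum_smul_eq_of_not_linearIndepOn ha hind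
    obtain ⟨b, hb, hbsum, hbind⟩ := ih _ (hk ▸ hcard) ha' rfl
    exact ⟨b, hb, hbsum.trans hsum, hbind⟩

theorem exists_fin_linearIndependent_nonneg_sum_smul_eq (v : ι → V) {a : ι → 𝕜} (ha : 0 ≤ a) :
    ∃ (k : ℕ) (f : Fin k → ι) (c : Fin k → 𝕜), 0 ≤ c ∧ LinearIndependent 𝕜 (v ∘ f) ∧
      ∑ y, c y • v (f y) = ∑ i, a i • v i := by
  obtain ⟨b, hb, hsum, hind⟩ := exists_nonneg_sum_smul_eq_linearIndepOn v ha
  set t := univ.filter (b · ≠ 0)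
  let e : Fin #t ≃ t := t.equivFin.symm
  refine ⟨#t, fun y => e y, fun y => b (e y), fun y => hb _, hind.comp e e.injective, ?_⟩
  rw [← hsum, e.sum_comp (fun x => b x • v x), sum_coe_sort t (fun x => b x • v x)]
  exact sum_filter_of_ne fun _ _ => left_ne_zero_of_smul

end ConicCaratheodory

/-- For a Hermitian matrix, `re + im` of the entries `(i, j)` and `(j, i)` are `re + im` and
`re - im` of the single number `A i j`, so `re + im` of the entries determines the matrix. -/
lemma Matrix.IsHermitian.eq_of_re_add_im_eq {n : Type*} {A B : Matrix n n ℂ} (hA : A.IsHermitian)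
    (hB : B.IsHermitian) (h : ∀ i j, (A i j).re + (A i j).im = (B i j).re + (B i j).im) :
    A = B := by
  ext i j
  have hji := h j i
  rw [← hA.apply j i, ← hB.apply j i] at hji
  simp only [RCLike.star_def, Complex.conj_re, Complex.conj_im] at hji
  apply Complex.ext <;> linarith [h i j]

theorem stmt_10_general {n m s : ℕ} {S : Type*} [AddCommGroup S] [Module ℝ S]
    [FiniteDimensional ℝ S] (hS : finrank ℝ S = m)
    (Φ : Matrix (Fin n) (Fin n) ℂ →ₗ[ℝ] S)
    (M : Fin s → Matrix (Fin n) (Fin n) ℂ)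
    (hM : ∀ x, (M x).PosSemidef) (hMsum : ∑ x, M x = 1) :
    ∃ (s' : ℕ) (N : Fin s' → Matrix (Fin n) (Fin n) ℂ)
      (f : Fin s' → Fin s) (c : Fin s' → ℝ),
      s' ≤ n ^ 2 + m ∧
      (∀ y, 0 ≤ c y) ∧
      (∀ y, N y = c y • M (f y)) ∧
      (∀ y, (N y).PosSemidef) ∧
      (∑ y, N y = 1) ∧
      (∑ y, Φ (N y) = ∑ x, Φ (M x)) := by
  let L := (Complex.reLm + Complex.imLm).mapMatrix.prod Φ
  obtain ⟨k, f, c, hc, hind, hsum⟩ := exists_fin_linearIndependent_nonneg_sum_smul_eq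
    (fun x => L (M x)) (zero_le_one (α := Fin s → ℝ))
  have hk : k ≤ n ^ 2 + m := by
    simpa [finrank_prod, finrank_matrix, hS, sq] using hind.fintype_card_le_finrank
  have hL : L (∑ y, c y • M (f y)) = L (∑ x, M x) := by
    simpa only [map_sum, map_smul, Pi.one_apply, one_smul] using hsum
  have hNpsd : ∀ y, (c y • M (f y)).PosSemidef := fun y => (hM _).smul (hc y)
  have hN : ∑ y, c y • M (f y) = 1 := by
    refine IsHermitian.eq_of_re_add_im_eq (posSemidef_sum _ fun y _ => hNpsd y).isHermitian
      isHermitian_one fun i j => ?_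
    rw [← hMsum]
    exact congrArg (fun p => p.1 i j) hL
  refine ⟨k, fun y => c y • M (f y), f, c, hk, hc, fun _ => rfl, hNpsd, hN, ?_⟩
  rw [← map_sum, ← map_sum]
  exact congrArg Prod.snd hL

/-- Carathéodory-type reduction for POVMs: if Φ is a real-linear
map into an m-dimensional real vector space S, and M is a POVM with more than
D + m outcomes (D = (dim H)² the dimension of the Hermitian operators), then
there is a POVM with at most D + m outcomes, each element a nonnegative multiple
of an element of M, with the same sum Σ Φ(Mₓ) (and of course the same sum I). -/
theorem stmt_10 {n m s : ℕ} {S : Type*} [AddCommGroup S] [Module ℝ S]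
    [FiniteDimensional ℝ S] (hS : finrank ℝ S = m)
    (Φ : Matrix (Fin n) (Fin n) ℂ →ₗ[ℝ] S)
    (M : Fin s → Matrix (Fin n) (Fin n) ℂ)
    (hM : ∀ x, (M x).PosSemidef) (hMsum : ∑ x, M x = 1)
    (hs : s > n ^ 2 + m) :
    ∃ (s' : ℕ) (N : Fin s' → Matrix (Fin n) (Fin n) ℂ)
      (f : Fin s' → Fin s) (c : Fin s' → ℝ),
      s' ≤ n ^ 2 + m ∧
      (∀ y, 0 ≤ c y) ∧
      (∀ y, N y = c y • M (f y)) ∧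
      (∀ y, (N y).PosSemidef) ∧
      (∑ y, N y = 1) ∧
      (∑ y, Φ (N y) = ∑ x, Φ (M x)) :=
  stmt_10_general hS Φ M hM hMsum
end

section
/- Fix a density operator ρ and Hermitian operators D₁,...,D_d on a finite-dimensional Hilbert space H with n := dim H. For every POVM M with s outcomes there exists a POVM N with at most n² + d(d+1)/2 outcomes, each element of N being a nonnegative multiple of an element of M, such that F[N] = F[M], where F is the classical Fisher information matrix F[M] = Σₓ g[Mₓ] with g[Z]ᵢⱼ = tr(DᵢZ)tr(DⱼZ)/tr(ρZ) (and 0 when tr(ρZ)=0). -/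
/-!
Carathéodory's argument for cones: if `s` vectors `vₓ` lie in a space of dimension less than
`s`, a relation `∑ cₓ vₓ = 0` with some `cₓ > 0` yields the weights `wₓ = 1 - cₓ / max c ≥ 0`,
one of them zero, with `∑ wₓ vₓ = ∑ vₓ`. The pairs `(Mₓ, g[Mₓ])` live in the real space of
Hermitian `n × n` matrices times real symmetric `d × d` matrices, of dimension `n² + d(d+1)/2`,
and `g[t X] = t g[X]`; so as long as `s` exceeds this bound, `(wₓ Mₓ)` is a POVM with the same
Fisher information and one outcome fewer.
-/

open Matrix
open scoped ComplexOrder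

/-- The matrix g[X] with entries tr(DᵢX)tr(DⱼX)/tr(ρX), defined as 0 when tr(ρX)=0. -/
noncomputable def gMat {n d : ℕ} (ρ : Matrix (Fin n) (Fin n) ℂ)
    (D : Fin d → Matrix (Fin n) (Fin n) ℂ) (X : Matrix (Fin n) (Fin n) ℂ) :
    Matrix (Fin d) (Fin d) ℝ :=
  if ((ρ * X).trace).re = 0 then 0
  else Matrix.of fun i j => ((D i * X).trace.re * (D j * X).trace.re) / ((ρ * X).trace).re

/-- The classical Fisher information matrix F[M] = Σₓ g[Mₓ] of a POVM M. -/
noncomputable def Fmat {n d s : ℕ} (ρ : Matrix (Fin n) (Fin n) ℂ)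
    (D : Fin d → Matrix (Fin n) (Fin n) ℂ) (M : Fin s → Matrix (Fin n) (Fin n) ℂ) :
    Matrix (Fin d) (Fin d) ℝ :=
  ∑ x, gMat ρ D (M x)

open Module

theorem exists_nonneg_weights_sum_smul_eq_sum {𝕜 E ι : Type*} [Field 𝕜] [LinearOrder 𝕜]
    [IsStrictOrderedRing 𝕜] [AddCommGroup E] [Module 𝕜 E] [FiniteDimensional 𝕜 E]
    [Fintype ι] (v : ι → E) (h : finrank 𝕜 E < Fintype.card ι) :
    ∃ w : ι → 𝕜, (∀ i, 0 ≤ w i) ∧ (∃ i, w i = 0) ∧ ∑ i, w i • v i = ∑ i, v i := by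
  have hdep : ¬ LinearIndependent 𝕜 v := fun hli => h.not_ge hli.fintype_card_le_finrank
  obtain ⟨c, hc, j, hj⟩ : ∃ c : ι → 𝕜, ∑ i, c i • v i = 0 ∧ ∃ j, 0 < c j := by
    obtain ⟨c, hc, j, hj⟩ := Fintype.not_linearIndependent_iff.mp hdep
    rcases hj.lt_or_gt with hneg | hpos
    · exact ⟨-c, by simp [neg_smul, hc], j, neg_pos.mpr hneg⟩
    · exact ⟨c, hc, j, hpos⟩
  have : Nonempty ι := ⟨j⟩
  obtain ⟨i₀, hi₀⟩ := Finite.exists_max c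
  have hci₀ : 0 < c i₀ := hj.trans_le (hi₀ j)
  refine ⟨fun i => 1 - c i / c i₀, fun i => sub_nonneg.mpr ((div_le_one hci₀).mpr (hi₀ i)),
    ⟨i₀, by simp [hci₀.ne']⟩, ?_⟩
  simp only [sub_smul, one_smul, Finset.sum_sub_distrib, div_eq_inv_mul, mul_smul,
    ← Finset.smul_sum, hc, smul_zero, sub_zero]

theorem two_mul_finrank_selfAdjoint {A : Type*} [AddCommGroup A] [Module ℂ A] [StarAddMonoid A]
    [StarModule ℂ A] [FiniteDimensional ℝ A] :
    2 * finrank ℝ (selfAdjoint.submodule ℝ A) = finrank ℝ A := by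
  have := LinearMap.finrank_range_add_finrank_ker (imaginaryPart (A := A))
  rw [ker_imaginaryPart, LinearMap.range_eq_top.mpr imaginaryPart_surjective,
    finrank_top] at this
  rw [← this, two_mul]
  rfl

theorem finrank_selfAdjoint_matrix_complex (ι : Type*) [Fintype ι] :
    finrank ℝ (selfAdjoint.submodule ℝ (Matrix ι ι ℂ)) = Fintype.card ι ^ 2 := by
  have := two_mul_finrank_selfAdjoint (A := Matrix ι ι ℂ)
  rw [finrank_matrix, Complex.finrank_real_complex] at this
  linarith

def selfAdjointMatrixToSym2 (ι 𝕜 : Type*) [CommRing 𝕜] [StarRing 𝕜] [TrivialStar 𝕜] :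
    selfAdjoint.submodule 𝕜 (Matrix ι ι 𝕜) →ₗ[𝕜] (Sym2 ι → 𝕜) where
  toFun X := Sym2.lift ⟨fun i j => (X : Matrix ι ι 𝕜) i j, fun i j => by
    simpa using (isHermitian_iff_isSelfAdjoint.mpr X.2).apply j i⟩
  map_add' X Y := by ext z; induction z using Sym2.ind; simp
  map_smul' c X := by ext z; induction z using Sym2.ind; simp

theorem finrank_selfAdjoint_matrix_le {ι 𝕜 : Type*} [Fintype ι] [Field 𝕜] [StarRing 𝕜]
    [TrivialStar 𝕜] :
    finrank 𝕜 (selfAdjoint.submodule 𝕜 (Matrix ι ι 𝕜)) ≤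
      (Fintype.card ι + 1).choose 2 := by
  rw [← Sym2.card, ← finrank_pi 𝕜]
  refine LinearMap.finrank_le_finrank_of_injective (f := selfAdjointMatrixToSym2 ι 𝕜) ?_
  intro X Y h
  ext i j
  simpa [selfAdjointMatrixToSym2] using congrFun h s(i, j)

section Fisher

variable {n d : ℕ} (ρ : Matrix (Fin n) (Fin n) ℂ) (D : Fin d → Matrix (Fin n) (Fin n) ℂ)

@[simp]
theorem gMat_zero : gMat ρ D 0 = 0 := by
  simp [gMat]

theorem gMat_smul (t : ℝ) (X : Matrix (Fin n) (Fin n) ℂ) :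
    gMat ρ D (t • X) = t • gMat ρ D X := by
  have htr (A : Matrix (Fin n) (Fin n) ℂ) : (A * (t • X)).trace.re = t * (A * X).trace.re := by
    simp [trace_smul]
  rcases eq_or_ne t 0 with rfl | ht
  · simp
  unfold gMat
  by_cases hX : (ρ * X).trace.re = 0
  · simp [hX]
  · rw [if_neg hX, if_neg (by rw [htr]; exact mul_ne_zero ht hX)]
    ext i j
    simp only [Matrix.smul_apply, of_apply, htr, smul_eq_mul]
    field_simp

theorem gMat_isSelfAdjoint (X : Matrix (Fin n) (Fin n) ℂ) : IsSelfAdjoint (gMat ρ D X) := by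
  refine isHermitian_iff_isSelfAdjoint.mp (IsHermitian.ext fun i j => ?_)
  unfold gMat
  split_ifs
  · rfl
  · simp only [of_apply, star_trivial]
    ring

theorem exists_nonneg_weights_sum_smul_eq_and_sum_gMat_eq {ι : Type*} [Fintype ι]
    (M : ι → Matrix (Fin n) (Fin n) ℂ) (hM : ∀ x, (M x).IsHermitian)
    (hcard : n ^ 2 + d * (d + 1) / 2 < Fintype.card ι) :
    ∃ w : ι → ℝ, (∀ x, 0 ≤ w x) ∧ (∃ x, w x = 0) ∧ ∑ x, w x • M x = ∑ x, M x ∧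
      ∑ x, gMat ρ D (w x • M x) = ∑ x, gMat ρ D (M x) := by
  let v (x : ι) : selfAdjoint.submodule ℝ (Matrix (Fin n) (Fin n) ℂ) ×
      selfAdjoint.submodule ℝ (Matrix (Fin d) (Fin d) ℝ) :=
    (⟨M x, (hM x).isSelfAdjoint⟩, ⟨gMat ρ D (M x), gMat_isSelfAdjoint ρ D (M x)⟩)
  obtain ⟨w, hw, hw₀, hsum⟩ := exists_nonneg_weights_sum_smul_eq_sum (𝕜 := ℝ) v <| by
    have hsym := finrank_selfAdjoint_matrix_le (ι := Fin d) (𝕜 := ℝ)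
    rw [Fintype.card_fin, Nat.choose_two_right, Nat.add_sub_cancel, mul_comm] at hsym
    rw [finrank_prod, finrank_selfAdjoint_matrix_complex, Fintype.card_fin]
    omega
  refine ⟨w, hw, hw₀, ?_, ?_⟩
  · simpa [v, Prod.fst_sum] using congrArg (fun p => (p.1 : Matrix (Fin n) (Fin n) ℂ)) hsum
  · simpa [v, Prod.snd_sum, gMat_smul] using
      congrArg (fun p => (p.2 : Matrix (Fin d) (Fin d) ℝ)) hsum

end Fisher

theorem stmt_11_general {n d s : ℕ} (ρ : Matrix (Fin n) (Fin n) ℂ)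
    (D : Fin d → Matrix (Fin n) (Fin n) ℂ)
    (M : Fin s → Matrix (Fin n) (Fin n) ℂ)
    (hM : ∀ x, (M x).PosSemidef) (hMsum : ∑ x, M x = 1) :
    ∃ (s' : ℕ) (N : Fin s' → Matrix (Fin n) (Fin n) ℂ)
      (f : Fin s' → Fin s) (c : Fin s' → ℝ),
      s' ≤ n ^ 2 + d * (d + 1) / 2 ∧
      (∀ y, 0 ≤ c y) ∧
      (∀ y, N y = c y • M (f y)) ∧
      (∀ y, (N y).PosSemidef) ∧
      (∑ y, N y = 1) ∧
      Fmat ρ D N = Fmat ρ D M := by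
  induction s using Nat.strong_induction_on with
  | _ s ih =>
  by_cases hs : s ≤ n ^ 2 + d * (d + 1) / 2
  · exact ⟨s, M, id, fun _ => 1, hs, fun _ => zero_le_one, fun y => (one_smul ℝ _).symm, hM,
      hMsum, rfl⟩
  obtain ⟨m, rfl⟩ : ∃ m, s = m + 1 := ⟨s - 1, by omega⟩
  obtain ⟨w, hw, ⟨x₀, hwx₀⟩, hsum, hg⟩ :=
    exists_nonneg_weights_sum_smul_eq_and_sum_gMat_eq ρ D M (fun x => (hM x).isHermitian)
      (by simpa using not_le.mp hs)
  obtain ⟨s', N, f, c, hs', hc, hN, hNpsd, hNsum, hNF⟩ := ih m m.lt_succ_self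
    (fun y => w (x₀.succAbove y) • M (x₀.succAbove y)) (fun y => (hM _).smul (hw _))
    (by rw [← hMsum, ← hsum, Fin.sum_univ_succAbove _ x₀, hwx₀, zero_smul, zero_add])
  refine ⟨s', N, x₀.succAbove ∘ f, fun y => c y * w (x₀.succAbove (f y)), hs',
    fun y => mul_nonneg (hc y) (hw _), fun y => by rw [hN, mul_smul]; rfl, hNpsd, hNsum, ?_⟩
  rw [hNF, Fmat, Fmat, ← hg, Fin.sum_univ_succAbove _ x₀, hwx₀, zero_smul, gMat_zero,
    zero_add]

/-- for every POVM M there is a POVM N with at most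
n² + d(d+1)/2 outcomes, each element a nonnegative multiple of an element of M,
such that F[N] = F[M]. -/
theorem stmt_11 {n d s : ℕ} (ρ : Matrix (Fin n) (Fin n) ℂ)
    (D : Fin d → Matrix (Fin n) (Fin n) ℂ)
    (hρ : ρ.PosSemidef) (hρtr : ρ.trace = 1)
    (hD : ∀ i, (D i).IsHermitian)
    (hdeg : ∀ Z : Matrix (Fin n) (Fin n) ℂ, Z.PosSemidef → ((ρ * Z).trace).re = 0 →
      ∀ i, ((D i * Z).trace).re = 0)
    (M : Fin s → Matrix (Fin n) (Fin n) ℂ)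
    (hM : ∀ x, (M x).PosSemidef) (hMsum : ∑ x, M x = 1) :
    ∃ (s' : ℕ) (N : Fin s' → Matrix (Fin n) (Fin n) ℂ)
      (f : Fin s' → Fin s) (c : Fin s' → ℝ),
      s' ≤ n ^ 2 + d * (d + 1) / 2 ∧
      (∀ y, 0 ≤ c y) ∧
      (∀ y, N y = c y • M (f y)) ∧
      (∀ y, (N y).PosSemidef) ∧
      (∑ y, N y = 1) ∧
      Fmat ρ D N = Fmat ρ D M :=
  stmt_11_general ρ D M hM hMsum
end

section
/- Let ρ be a density operator, D₁,...,D_d Hermitian operators, and M a POVM such that F[M] is positive definite. Define the estimator θ̂ⁱ(x) = θ₀ⁱ + Σⱼ (F[M]⁻¹)ⁱʲ · tr(DⱼMₓ)/tr(ρMₓ) for outcomes x with tr(ρMₓ) > 0 (and θ̂(x) = θ₀ otherwise). Then (M, θ̂) is locally unbiased, i.e., Σₓ θ̂ⁱ(x)·tr(ρMₓ) = θ₀ⁱ and Σₓ θ̂ⁱ(x)·tr(DⱼMₓ) = δⁱⱼ for all i,j, and its MSE matrix V[M,θ̂]ⁱʲ = Σₓ(θ̂ⁱ(x)−θ₀ⁱ)(θ̂ʲ(x)−θ₀ʲ)tr(ρMₓ)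 equals F[M]⁻¹, achieving equality in the classical Cramér–Rao bound. -/
/-!
With `pₓ = tr(ρMₓ)` and the classical score `sₓ = (tr(DⱼMₓ)/pₓ)ⱼ`, the degeneracy hypothesis gives
`tr(DⱼMₓ) = pₓ sₓʲ` for every outcome, including those with `pₓ = 0` (where `sₓ = 0` since
`t / 0 = 0`). Hence `F[M] = Σₓ pₓ sₓ sₓᵀ`, `Σₓ pₓ sₓ = 0` and `θ̂(x) = θ₀ + F⁻¹ sₓ` for all `x`,
so `Σₓ pₓ θ̂(x) sₓᵀ = F⁻¹F = 1` and `Σₓ pₓ (θ̂(x) - θ₀)(θ̂(x) - θ₀)ᵀ = F⁻¹ F F⁻¹ᵀ = F⁻¹`,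
`F` being symmetric.
-/

open Matrix
open scoped ComplexOrder

open Finset

theorem Matrix.vecMulVec_mulVec_mulVec {α k l m : Type*} [CommSemiring α] [Fintype k]
    (A : Matrix l k α) (B : Matrix m k α) (u v : k → α) :
    vecMulVec (A *ᵥ u) (B *ᵥ v) = A * vecMulVec u v * Bᵀ := by
  rw [mul_vecMulVec, vecMulVec_mul, vecMul_transpose]

theorem Matrix.vecMulVec_sum {α ι m n : Type*} [NonUnitalNonAssocSemiring α] (u : m → α)
    (t : Finset ι) (v : ι → n → α) :
    vecMulVec u (∑ x ∈ t, v x) = ∑ x ∈ t, vecMulVec u (v x) := by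
  ext i j
  simp only [vecMulVec_apply, Matrix.sum_apply, Finset.sum_apply, Finset.mul_sum]

section ScoreEstimator

variable {ι m : Type*} [Fintype ι]

noncomputable def fisherInfo (p : ι → ℝ) (s : ι → m → ℝ) : Matrix m m ℝ :=
  ∑ x, p x • vecMulVec (s x) (s x)

theorem fisherInfo_transpose (p : ι → ℝ) (s : ι → m → ℝ) :
    (fisherInfo p s)ᵀ = fisherInfo p s := by
  simp only [fisherInfo, transpose_sum, transpose_smul, transpose_vecMulVec]

variable [Fintype m]

theorem sum_smul_vecMulVec_mulVec {k l : Type*} (p : ι → ℝ) (s : ι → m → ℝ)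
    (A : Matrix k m ℝ) (B : Matrix l m ℝ) :
    ∑ x, p x • vecMulVec (A *ᵥ s x) (B *ᵥ s x) = A * fisherInfo p s * Bᵀ := by
  simp only [vecMulVec_mulVec_mulVec, fisherInfo, Matrix.mul_sum, Matrix.sum_mul,
    Matrix.mul_smul, Matrix.smul_mul]

variable [DecidableEq m]

noncomputable def scoreEstimator (p : ι → ℝ) (s : ι → m → ℝ) (θ₀ : m → ℝ) (x : ι) : m → ℝ :=
  θ₀ + (fisherInfo p s)⁻¹ *ᵥ s x

variable {p : ι → ℝ} {s : ι → m → ℝ} (θ₀ : m → ℝ)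

theorem sum_smul_scoreEstimator (hp : ∑ x, p x = 1) (hs : ∑ x, p x • s x = 0) :
    ∑ x, p x • scoreEstimator p s θ₀ x = θ₀ := by
  simp only [scoreEstimator, smul_add, sum_add_distrib, ← sum_smul, hp, one_smul,
    ← mulVec_smul, ← mulVec_sum, hs, mulVec_zero, add_zero]

theorem sum_smul_vecMulVec_scoreEstimator (hs : ∑ x, p x • s x = 0)
    (hF : IsUnit (fisherInfo p s).det) :
    ∑ x, p x • vecMulVec (scoreEstimator p s θ₀ x) (s x) = 1 := by
  have h := sum_smul_vecMulVec_mulVec p s (fisherInfo p s)⁻¹ (1 : Matrix m m ℝ)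
  simp only [one_mulVec, transpose_one, Matrix.mul_one, nonsing_inv_mul _ hF] at h
  simp only [scoreEstimator, add_vecMulVec, smul_add, sum_add_distrib, h, add_eq_right]
  simp only [← vecMulVec_smul, ← vecMulVec_sum, hs, vecMulVec_zero]

theorem sum_smul_vecMulVec_scoreEstimator_sub (hF : IsUnit (fisherInfo p s).det) :
    ∑ x, p x • vecMulVec (scoreEstimator p s θ₀ x - θ₀) (scoreEstimator p s θ₀ x - θ₀) =
      (fisherInfo p s)⁻¹ := by
  simp only [scoreEstimator, add_sub_cancel_left, sum_smul_vecMulVec_mulVec,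
    transpose_nonsing_inv, fisherInfo_transpose, nonsing_inv_mul _ hF, Matrix.one_mul]

end ScoreEstimator

theorem sum_re_trace_mul_of_sum_eq_one {ι n : Type*} [Fintype ι] [Fintype n] [DecidableEq n]
    {M : ι → Matrix n n ℂ} (hM : ∑ x, M x = 1) (A : Matrix n n ℂ) :
    ∑ x, (A * M x).trace.re = A.trace.re := by
  rw [← Complex.re_sum, ← trace_sum, ← Matrix.mul_sum, hM, Matrix.mul_one]

theorem gMat_eq_smul_vecMulVec {n d : ℕ} (ρ : Matrix (Fin n) (Fin n) ℂ)
    (D : Fin d → Matrix (Fin n) (Fin n) ℂ) (X : Matrix (Fin n) (Fin n) ℂ) :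
    gMat ρ D X = (ρ * X).trace.re •
      vecMulVec (fun j => (D j * X).trace.re / (ρ * X).trace.re)
        (fun j => (D j * X).trace.re / (ρ * X).trace.re) := by
  unfold gMat
  split_ifs with h
  · rw [h, zero_smul]
  · ext i j
    simp only [of_apply, Matrix.smul_apply, vecMulVec_apply, smul_eq_mul]
    field_simp

theorem stmt_12_general {n d s : ℕ} (ρ : Matrix (Fin n) (Fin n) ℂ)
    (D : Fin d → Matrix (Fin n) (Fin n) ℂ) (θ0 : Fin d → ℝ)
    (hρtr : ρ.trace = 1)
    (hDtr : ∀ i, (D i).trace = 0)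
    (hdeg : ∀ Z : Matrix (Fin n) (Fin n) ℂ, Z.PosSemidef → ((ρ * Z).trace).re = 0 →
      ∀ i, ((D i * Z).trace).re = 0)
    (M : Fin s → Matrix (Fin n) (Fin n) ℂ)
    (hM : ∀ x, (M x).PosSemidef) (hMsum : ∑ x, M x = 1)
    (hF : IsUnit (Fmat ρ D M).det)
    (θhat : Fin s → Fin d → ℝ)
    (hθhat : ∀ x, θhat x =
      if ((ρ * M x).trace).re = 0 then θ0
      else fun i => θ0 i +
        ∑ j, (Fmat ρ D M)⁻¹ i j * (((D j * M x).trace).re / ((ρ * M x).trace).re)) :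
    (∀ i, ∑ x, θhat x i * ((ρ * M x).trace).re = θ0 i) ∧
    (∀ i j, ∑ x, θhat x i * ((D j * M x).trace).re = if i = j then 1 else 0) ∧
    (Matrix.of fun i j =>
        ∑ x, (θhat x i - θ0 i) * (θhat x j - θ0 j) * ((ρ * M x).trace).re)
      = (Fmat ρ D M)⁻¹ := by
  set p : Fin s → ℝ := fun x => ((ρ * M x).trace).re
  set score : Fin s → Fin d → ℝ := fun x j => ((D j * M x).trace).re / p x
  have hFisher : Fmat ρ D M = fisherInfo p score := by
    simp only [Fmat, gMat_eq_smul_vecMulVec]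
    rfl
  have hp : ∑ x, p x = 1 := by simp [p, sum_re_trace_mul_of_sum_eq_one hMsum, hρtr]
  have hpscore : ∀ x j, p x * score x j = ((D j * M x).trace).re :=
    fun x j => mul_div_cancel_of_imp' (hdeg _ (hM x) · j)
  have hs : ∑ x, p x • score x = 0 := by
    ext j
    simp [Finset.sum_apply, hpscore, sum_re_trace_mul_of_sum_eq_one hMsum, hDtr]
  have hθ : θhat = scoreEstimator p score θ0 := by
    funext x
    rw [hθhat x, scoreEstimator, ← hFisher]
    split_ifs with h
    · rw [show score x = 0 from funext fun j => by simp [score, p, h], mulVec_zero, add_zero]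
    · ext i
      simp [mulVec, dotProduct, score, p]
  subst hθ
  rw [hFisher] at hF ⊢
  refine ⟨fun i => ?_, fun i j => ?_, ?_⟩
  · simpa [Finset.sum_apply, mul_comm] using congrFun (sum_smul_scoreEstimator θ0 hp hs) i
  · simpa [Matrix.sum_apply, vecMulVec_apply, ← hpscore, one_apply, mul_left_comm] using
      congrFun₂ (sum_smul_vecMulVec_scoreEstimator θ0 hs hF) i j
  · rw [← sum_smul_vecMulVec_scoreEstimator_sub θ0 hF]
    ext i j
    simp [Matrix.sum_apply, vecMulVec_apply, p, mul_comm]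

/-- the canonical estimator
θ̂ⁱ(x) = θ₀ⁱ + Σⱼ (F[M]⁻¹)ⁱʲ tr(DⱼMₓ)/tr(ρMₓ) is locally unbiased and its MSE
matrix equals F[M]⁻¹, achieving equality in the classical Cramér–Rao bound. -/
theorem stmt_12 {n d s : ℕ} (ρ : Matrix (Fin n) (Fin n) ℂ)
    (D : Fin d → Matrix (Fin n) (Fin n) ℂ) (θ0 : Fin d → ℝ)
    (hρ : ρ.PosSemidef) (hρtr : ρ.trace = 1)
    (hD : ∀ i, (D i).IsHermitian) (hDtr : ∀ i, (D i).trace = 0)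
    (hdeg : ∀ Z : Matrix (Fin n) (Fin n) ℂ, Z.PosSemidef → ((ρ * Z).trace).re = 0 →
      ∀ i, ((D i * Z).trace).re = 0)
    (M : Fin s → Matrix (Fin n) (Fin n) ℂ)
    (hM : ∀ x, (M x).PosSemidef) (hMsum : ∑ x, M x = 1)
    (hF : IsUnit (Fmat ρ D M).det)
    (θhat : Fin s → Fin d → ℝ)
    (hθhat : ∀ x, θhat x =
      if ((ρ * M x).trace).re = 0 then θ0
      else fun i => θ0 i +
        ∑ j, (Fmat ρ D M)⁻¹ i j * (((D j * M x).trace).re / ((ρ * M x).trace).re)) :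
    (∀ i, ∑ x, θhat x i * ((ρ * M x).trace).re = θ0 i) ∧
    (∀ i j, ∑ x, θhat x i * ((D j * M x).trace).re = if i = j then 1 else 0) ∧
    (Matrix.of fun i j =>
        ∑ x, (θhat x i - θ0 i) * (θhat x j - θ0 j) * ((ρ * M x).trace).re)
      = (Fmat ρ D M)⁻¹ :=
  stmt_12_general ρ D θ0 hρtr hDtr hdeg M hM hMsum hF θhat hθhat
end

section
/- Let M = (M₁,...,M_s) be a POVM on a finite-dimensional Hilbert space and suppose each Mₓ decomposes as Mₓ = Σ_k N_{x,k} with each N_{x,k} ≥ 0. Then N := (N_{x,k})_{x,k} is a POVM, and F[N] ≥ F[M] in the Loewner order, where F is the classical Fisher information matrix F[M] = Σₓ g[Mₓ] with g as above. -/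
open Matrix
open scoped ComplexOrder

/-! For a real test vector `v`, the quadratic form of `g[X]` is `φ(X)² / τ(X)` with the linear
functionals `φ(X) = Re tr((∑ vᵢ Dᵢ) X)` and `τ(X) = Re tr(ρ X) ≥ 0`. Subadditivity of `g` on
positive matrices is then Sedrakyan's (Titu's) form of Cauchy–Schwarz,
`(∑ φⱼ)² / ∑ τⱼ ≤ ∑ φⱼ² / τⱼ`, where the degeneracy condition makes the summands with `τⱼ = 0`
harmless. Summing over the outcomes `x` gives the Loewner inequality. -/

open Finset

theorem Finset.sq_sum_div_le_sum_sq_div_of_nonneg {ι R : Type*} [Semifield R] [LinearOrder R]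
    [IsStrictOrderedRing R] [ExistsAddOfLE R] (s : Finset ι) (f : ι → R) {g : ι → R}
    (hg : ∀ i ∈ s, 0 ≤ g i) (hfg : ∀ i ∈ s, g i = 0 → f i = 0) :
    (∑ i ∈ s, f i) ^ 2 / ∑ i ∈ s, g i ≤ ∑ i ∈ s, f i ^ 2 / g i := by
  classical
  set t := s.filter fun i => g i ≠ 0
  have hf : ∑ i ∈ t, f i = ∑ i ∈ s, f i :=
    sum_filter_of_ne fun i hi hfi hgi => hfi (hfg i hi hgi)
  have hg' : ∑ i ∈ t, g i = ∑ i ∈ s, g i := sum_filter_of_ne fun _ _ h => h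
  have hfg' : ∑ i ∈ t, f i ^ 2 / g i = ∑ i ∈ s, f i ^ 2 / g i :=
    sum_filter_of_ne fun i _ h hgi => h (by rw [hgi, div_zero])
  rw [← hf, ← hg', ← hfg']
  refine sq_sum_div_le_sum_sq_div t f fun i hi => ?_
  obtain ⟨hi, hgi⟩ := mem_filter.mp hi
  exact (hg i hi).lt_of_ne' hgi

theorem Matrix.PosSemidef.re_trace_mul_nonneg {n : Type*} [Fintype n] {A B : Matrix n n ℂ}
    (hA : A.PosSemidef) (hB : B.PosSemidef) : 0 ≤ (A * B).trace.re := by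
  classical
  obtain ⟨C, rfl⟩ : ∃ C : Matrix n n ℂ, B = Cᴴ * C := by
    open scoped MatrixOrder in
    exact CStarAlgebra.nonneg_iff_eq_star_mul_self.mp hB.nonneg
  rw [← Matrix.mul_assoc, trace_mul_cycle]
  exact (Complex.nonneg_iff.mp (hA.mul_mul_conjTranspose_same C).trace_nonneg).1

theorem Matrix.re_trace_mul_sum {n ι : Type*} [Fintype n] (s : Finset ι) (A : Matrix n n ℂ)
    (N : ι → Matrix n n ℂ) : (A * ∑ j ∈ s, N j).trace.re = ∑ j ∈ s, (A * N j).trace.re := by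
  rw [mul_sum, trace_sum, Complex.re_sum]

section gMat

variable {n d : ℕ} (ρ : Matrix (Fin n) (Fin n) ℂ) (D : Fin d → Matrix (Fin n) (Fin n) ℂ)

-- The case split in `gMat` is redundant, since Lean's `a / 0 = 0` already gives the zero matrix.
theorem gMat_eq_of (X : Matrix (Fin n) (Fin n) ℂ) :
    gMat ρ D X = of fun i j => (D i * X).trace.re * (D j * X).trace.re / (ρ * X).trace.re := by
  unfold gMat
  split_ifs with h
  · ext i j
    simp [h]
  · rfl

theorem gMat_isHermitian (X : Matrix (Fin n) (Fin n) ℂ) : (gMat ρ D X).IsHermitian := by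
  ext i j
  simp [gMat_eq_of, mul_comm]

theorem dotProduct_gMat_mulVec (X : Matrix (Fin n) (Fin n) ℂ) (v : Fin d → ℝ) :
    v ⬝ᵥ gMat ρ D X *ᵥ v = ((∑ i, v i • D i) * X).trace.re ^ 2 / (ρ * X).trace.re := by
  have hlin : ((∑ i, v i • D i) * X).trace.re = ∑ i, v i * (D i * X).trace.re := by
    simp [sum_mul, trace_sum, Complex.re_sum, trace_smul]
  rw [hlin, sq, sum_mul_sum, sum_div]
  simp only [gMat_eq_of, dotProduct, mulVec, of_apply, mul_sum, sum_div]
  refine sum_congr rfl fun i _ => sum_congr rfl fun j _ => ?_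
  ring

theorem posSemidef_sum_gMat_sub_gMat_sum {ι : Type*} [Fintype ι] (hρ : ρ.PosSemidef)
    (hdeg : ∀ Z : Matrix (Fin n) (Fin n) ℂ, Z.PosSemidef → ((ρ * Z).trace).re = 0 →
      ∀ i, ((D i * Z).trace).re = 0)
    (N : ι → Matrix (Fin n) (Fin n) ℂ) (hN : ∀ j, (N j).PosSemidef) :
    (∑ j, gMat ρ D (N j) - gMat ρ D (∑ j, N j)).PosSemidef := by
  refine .of_dotProduct_mulVec_nonneg
    ((isSelfAdjoint_sum _ fun j _ => gMat_isHermitian ρ D (N j)).sub (gMat_isHermitian ρ D _))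
    fun v => ?_
  simp only [star_trivial, sub_mulVec, dotProduct_sub, sub_nonneg, sum_mulVec, dotProduct_sum,
    dotProduct_gMat_mulVec, re_trace_mul_sum]
  refine sq_sum_div_le_sum_sq_div_of_nonneg _ _ (fun j _ => hρ.re_trace_mul_nonneg (hN j))
    fun j _ hj => ?_
  simp [sum_mul, trace_sum, Complex.re_sum, trace_smul, hdeg (N j) (hN j) hj]

end gMat

theorem stmt_18_general {n d s : ℕ} (ρ : Matrix (Fin n) (Fin n) ℂ)
    (D : Fin d → Matrix (Fin n) (Fin n) ℂ)
    (hρ : ρ.PosSemidef)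
    (hdeg : ∀ Z : Matrix (Fin n) (Fin n) ℂ, Z.PosSemidef → ((ρ * Z).trace).re = 0 →
      ∀ i, ((D i * Z).trace).re = 0)
    (M : Fin s → Matrix (Fin n) (Fin n) ℂ)
    (hMsum : ∑ x, M x = 1)
    (k : Fin s → ℕ)
    (N : (x : Fin s) → Fin (k x) → Matrix (Fin n) (Fin n) ℂ)
    (hNpos : ∀ x j, (N x j).PosSemidef)
    (hNdec : ∀ x, M x = ∑ j, N x j) :
    (∑ x, ∑ j, N x j = 1) ∧
    ((∑ x, ∑ j, gMat ρ D (N x j)) - ∑ x, gMat ρ D (M x)).PosSemidef := by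
  refine ⟨by simpa only [hNdec] using hMsum, ?_⟩
  simp only [hNdec, ← sum_sub_distrib]
  exact posSemidef_sum _ fun x _ => posSemidef_sum_gMat_sub_gMat_sum ρ D hρ hdeg (N x) (hNpos x)

/-- refining a POVM by decomposing each element Mₓ = Σ_k N_{x,k}
into positive semidefinite parts yields a POVM (N_{x,k}) whose classical Fisher
information matrix dominates that of M in the Loewner order. -/
theorem stmt_18 {n d s : ℕ} (ρ : Matrix (Fin n) (Fin n) ℂ)
    (D : Fin d → Matrix (Fin n) (Fin n) ℂ)
    (hρ : ρ.PosSemidef) (hρtr : ρ.trace = 1)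
    (hD : ∀ i, (D i).IsHermitian)
    (hdeg : ∀ Z : Matrix (Fin n) (Fin n) ℂ, Z.PosSemidef → ((ρ * Z).trace).re = 0 →
      ∀ i, ((D i * Z).trace).re = 0)
    (M : Fin s → Matrix (Fin n) (Fin n) ℂ)
    (hM : ∀ x, (M x).PosSemidef) (hMsum : ∑ x, M x = 1)
    (k : Fin s → ℕ)
    (N : (x : Fin s) → Fin (k x) → Matrix (Fin n) (Fin n) ℂ)
    (hNpos : ∀ x j, (N x j).PosSemidef)
    (hNdec : ∀ x, M x = ∑ j, N x j) :
    (∑ x, ∑ j, N x j = 1) ∧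
    ((∑ x, ∑ j, gMat ρ D (N x j)) - ∑ x, gMat ρ D (M x)).PosSemidef :=
  stmt_18_general ρ D hρ hdeg M hMsum k N hNpos hNdec
end
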